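/- arXiv:1902.05302 — 2 statements merged into one kernel-verified Lean document; each statement's English description precedes it below -/
import Mathlib

section
/- For every integer D ≥ 1, one has the polynomial identity F_{1,D}(x_1,…,x_D) = (1/D!) · ∏_{1≤i<j≤D}(x_j−x_i) · Σ_{t=0}^{D} (−1)^t E_{D,D−t}(x_1,…,x_D)/(t+1), where E_{D,k} denotes the k-th elementary symmetric polynomial in x_1,…,x_D (with E_{D,0} = 1). -/
open Nat Finset

/-- `F_{r,D}(x_1,…,x_D)`: the determinant of the rD×rD matrix whose rows are indexed
(in lexicographic order) by pairs `(i,j)`, corresponding to `n = i·D + j + 1 ∈ {1,…,rD}`,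
and whose columns are indexed by pairs `(m,v)` with `0 ≤ m ≤ r−1`, `1 ≤ v ≤ D`
(ordered lexicographically), with `(n,(m,v))` entry `B_{n+m}(x_v)/(n+m)`. -/
noncomputable def Fpoly (r D : ℕ) : MvPolynomial (Fin D) ℚ :=
  Matrix.det (Matrix.of fun (p q : Fin r × Fin D) =>
    MvPolynomial.C ((((p.1 : ℕ) * D + (p.2 : ℕ) + 1 + (q.1 : ℕ) : ℕ) : ℚ))⁻¹ *
      Polynomial.aeval (MvPolynomial.X q.2)
        (Polynomial.bernoulli ((p.1 : ℕ) * D + (p.2 : ℕ) + 1 + (q.1 : ℕ))))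

/-- The Vandermonde product `∏_{1 ≤ i < j ≤ D} (x_j − x_i)`. -/
noncomputable def vand (D : ℕ) : MvPolynomial (Fin D) ℚ :=
  ∏ p ∈ Finset.univ.filter (fun p : Fin D × Fin D => p.1 < p.2),
    (MvPolynomial.X p.2 - MvPolynomial.X p.1)

/-- The rD×rD matrix with rows `n = 1,…,rD` (encoded as pairs `(i,j)`, `n = i·D+j+1`,
in lexicographic order), columns indexed by pairs `(m,v)`, `0 ≤ m ≤ r−1`, `1 ≤ v ≤ D`
(`v` encoded as `q.2 + 1`), and `(n,(m,v))` entry `D^{n+m−1}·B_{n+m}(v/D)/(n+m)`. -/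
noncomputable def deltaMat (r D : ℕ) : Matrix (Fin r × Fin D) (Fin r × Fin D) ℚ :=
  Matrix.of fun p q =>
    (D : ℚ) ^ ((p.1 : ℕ) * D + (p.2 : ℕ) + (q.1 : ℕ)) *
      (Polynomial.bernoulli ((p.1 : ℕ) * D + (p.2 : ℕ) + 1 + (q.1 : ℕ))).eval
        (((q.2 : ℕ) + 1 : ℚ) / D) /
      (((p.1 : ℕ) * D + (p.2 : ℕ) + 1 + (q.1 : ℕ) : ℕ) : ℚ)

/-- `Δ_{r,D}`. -/
noncomputable def delta (r D : ℕ) : ℚ := (deltaMat r D).det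

/-!
Since `∫₀¹ B_k = 0` for `k ≥ 1` and `∫₀¹ B_0 = 1`, the matrix `(B_n(x_v))_{1 ≤ n ≤ D}` is the
minor of the bordered matrix with rows `(∫₀¹ B_k, B_k(x_1), …, B_k(x_D))`, `0 ≤ k ≤ D`, so its
determinant is `∫₀¹` applied to `det (B_k(w_i))` with `w = (y, x_1, …, x_D)`, the integration
acting on the first row. The `B_k` are monic of degree `k`, so that determinant is the Vandermonde
determinant `∏_j (x_j - y) · ∏_{i<j} (x_j - x_i)`, and integrating `∏_j (x_j - y)` term by term
gives `Σ_t (-1)^t E_{D-t} / (t+1)`. The factor `1/D!` is the product of the denominators `n`.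
-/

namespace Matrix

variable {R : Type*} [CommRing R]

theorem det_cons_apply_linearMap {S : Type*} [CommRing S] [Algebra R S] {n : ℕ}
    (L : S →ₗ[R] R) (q : Fin (n + 1) → S) (A : Fin n → Fin (n + 1) → R) :
    det (of (Fin.cons (fun j => L (q j)) A)) =
      L (det (of (Fin.cons q fun i j => algebraMap R S (A i j)))) := by
  simp only [det_succ_row_zero, map_sum]
  refine sum_congr rfl fun j _ => ?_
  set d := ((of A).submatrix id j.succAbove).det
  have hminor : (of (Fin.cons q fun i j => algebraMap R S (A i j))).submatrix Fin.succ
      j.succAbove = ((of A).submatrix id j.succAbove).map (algebraMap R S) := rfl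
  have hminorL : (of (Fin.cons (fun j => L (q j)) A)).submatrix Fin.succ j.succAbove =
      (of A).submatrix id j.succAbove := rfl
  have hsmul : (-1 : S) ^ (j : ℕ) * q j * algebraMap R S d = ((-1) ^ (j : ℕ) * d) • q j := by
    rw [Algebra.smul_def]
    simp only [map_mul, map_pow, map_neg, map_one]
    ring
  rw [hminor, hminorL, ← RingHom.mapMatrix_apply, ← RingHom.map_det]
  change _ * L (q j) * _ = L (_ * q j * _)
  rw [hsmul, map_smul, smul_eq_mul]
  ring

theorem det_vandermonde_cons {n : ℕ} (a : R) (v : Fin n → R) :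
    det (vandermonde (Fin.cons a v)) = (∏ j, (v j - a)) * det (vandermonde v) := by
  simp only [det_vandermonde, Fin.prod_univ_succ, Fin.prod_Ioi_zero, Fin.prod_Ioi_succ,
    Fin.cons_zero, Fin.cons_succ]

theorem det_vandermonde_eq_prod_filter {n : ℕ} (v : Fin n → R) :
    det (vandermonde v) =
      ∏ p ∈ univ.filter (fun p : Fin n × Fin n => p.1 < p.2), (v p.2 - v p.1) := by
  rw [det_vandermonde, prod_filter, Fintype.prod_prod_type]
  refine prod_congr rfl fun i _ => ?_
  rw [← prod_filter]
  congr 1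
  ext j
  simp

end Matrix

namespace Polynomial

theorem natDegree_bernoulli (n : ℕ) : (bernoulli n).natDegree = n := by
  refine natDegree_eq_of_le_of_coeff_ne_zero ?_ (by simp [coeff_bernoulli])
  exact natDegree_le_iff_coeff_eq_zero.mpr fun i hi => by
    simp [coeff_bernoulli, Nat.not_le.mpr hi]

theorem monic_bernoulli (n : ℕ) : (bernoulli n).Monic := by
  simp [Monic, leadingCoeff, natDegree_bernoulli, coeff_bernoulli]

variable {R : Type*} [CommRing R] [Algebra ℚ R]

variable (R) in
/-- The formal integral `p ↦ ∫₀¹ p(y) dy`, sending `X ^ n` to `1 / (n + 1)`. -/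
noncomputable def integralUnitInterval : R[X] →ₗ[R] R :=
  lsum fun n => ((n + 1 : ℚ)⁻¹) • LinearMap.id

theorem integralUnitInterval_monomial (n : ℕ) (a : R) :
    integralUnitInterval R (monomial n a) = (n + 1 : ℚ)⁻¹ • a := by
  simp [integralUnitInterval, sum_monomial_index]

theorem integralUnitInterval_eq_sum {p : R[X]} {n : ℕ} (hp : p.natDegree ≤ n) :
    integralUnitInterval R p = ∑ t ∈ range (n + 1), (t + 1 : ℚ)⁻¹ • p.coeff t := by
  simp only [integralUnitInterval, lsum_apply]
  exact sum_over_range' p (fun _ => smul_zero _) (n + 1) (by omega)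

theorem integralUnitInterval_derivative (p : R[X]) :
    integralUnitInterval R (derivative p) = p.eval 1 - p.eval 0 := by
  induction p using Polynomial.induction_on' with
  | add p q hp hq => simp only [map_add, hp, hq, eval_add]; ring
  | monomial n a =>
    rcases n with _ | n
    · simp
    · rw [derivative_monomial, integralUnitInterval_monomial]
      have hn : ((n : R) + 1) = algebraMap ℚ R (n + 1) := by simp
      simp only [Algebra.smul_def, eval_monomial, Nat.cast_add, Nat.cast_one, hn, one_pow,
        mul_one, zero_pow n.succ_ne_zero, mul_zero, sub_zero]
      rw [mul_left_comm, ← map_mul, Nat.add_sub_cancel, inv_mul_cancel₀ (by positivity), map_one,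
        mul_one]

theorem integralUnitInterval_map (p : ℚ[X]) :
    integralUnitInterval R (p.map (algebraMap ℚ R)) =
      algebraMap ℚ R (integralUnitInterval ℚ p) := by
  induction p using Polynomial.induction_on' with
  | add p q hp hq => simp only [Polynomial.map_add, map_add, hp, hq]
  | monomial n a => simp [integralUnitInterval_monomial, Algebra.smul_def]

theorem integralUnitInterval_bernoulli (k : ℕ) :
    integralUnitInterval ℚ (bernoulli k) = if k = 0 then 1 else 0 := by
  have h := integralUnitInterval_derivative (bernoulli (k + 1))
  have hend := bernoulli_eval_one_add (k + 1) 0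
  rw [add_zero] at hend
  rw [derivative_bernoulli_add_one, show ((k : ℚ[X]) + 1) = C ((k : ℚ) + 1) by simp,
    ← smul_eq_C_mul, map_smul, hend, add_sub_cancel_left, smul_eq_mul, Nat.cast_succ,
    add_tsub_cancel_right] at h
  rw [mul_left_cancel₀ (by positivity : (k : ℚ) + 1 ≠ 0) h]
  split_ifs with hk <;> simp [hk]

theorem integralUnitInterval_aeval_X_bernoulli (k : ℕ) :
    integralUnitInterval R (aeval X (bernoulli k)) = if k = 0 then 1 else 0 := by
  rw [← aeval_map_algebraMap R, aeval_X_left_apply, integralUnitInterval_map,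
    integralUnitInterval_bernoulli]
  split_ifs <;> simp

theorem integralUnitInterval_prod_C_sub_X (s : Multiset R) :
    integralUnitInterval R (s.map fun a => C a - X).prod =
      ∑ t ∈ range (Multiset.card s + 1),
        ((-1) ^ t * (t + 1 : ℚ)⁻¹) • s.esymm (Multiset.card s - t) := by
  nontriviality R
  have hneg : (s.map fun a => C a - X).prod =
      C ((-1) ^ Multiset.card s) * (s.map fun a => X - C a).prod := by
    rw [map_pow, map_neg, map_one, ← Multiset.card_map (fun a => X - C a) s,
      ← Multiset.prod_map_neg, Multiset.map_map]
    simp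
  rw [hneg, ← smul_eq_C_mul, map_smul,
    integralUnitInterval_eq_sum (natDegree_multiset_prod_X_sub_C_eq_card s).le, smul_sum]
  refine sum_congr rfl fun t ht => ?_
  have ht : t ≤ Multiset.card s := Nat.lt_succ_iff.mp (mem_range.mp ht)
  have hsign : (-1 : R) ^ Multiset.card s * (-1) ^ (Multiset.card s - t) = (-1) ^ t := by
    rw [← pow_add, show Multiset.card s + (Multiset.card s - t) = t + 2 * (Multiset.card s - t) by
      omega, pow_add, pow_mul]
    simp
  rw [Multiset.prod_X_sub_C_coeff s ht]
  simp only [Algebra.smul_def, map_mul, map_pow, map_neg, map_one, Algebra.algebraMap_self]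
  rw [← hsign]
  ring

open Matrix

theorem det_aeval_bernoulli_succ_eq_integralUnitInterval {n : ℕ} (x : Fin n → R) :
    det (of fun i j : Fin n => aeval (x j) (bernoulli (i + 1))) =
      integralUnitInterval R (det (vandermonde (Fin.cons X fun i => C (x i)))) := by
  nontriviality R
  set L := integralUnitInterval R
  set A : Fin n → Fin (n + 1) → R := fun i j => aeval (x i) (bernoulli j)
  have hborder : det (of fun i j : Fin n => aeval (x j) (bernoulli (i + 1))) =
      det (of (Fin.cons (fun j : Fin (n + 1) => L (aeval X (bernoulli j))) A)) := by
    rw [det_succ_row_zero, Fin.sum_univ_succ, Finset.sum_eq_zero fun j _ => ?_]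
    · change _ = _ * L (aeval X (bernoulli 0)) * _ + 0
      rw [integralUnitInterval_aeval_X_bernoulli]
      simp only [Fin.val_zero, pow_zero, if_pos, one_mul, mul_one, add_zero, Fin.succAbove_zero]
      rw [← det_transpose]
      rfl
    · change _ * L (aeval X (bernoulli (j + 1))) * _ = 0
      rw [integralUnitInterval_aeval_X_bernoulli, if_neg (Nat.succ_ne_zero j), mul_zero, zero_mul]
  have hbernoulli : of (Fin.cons (fun j : Fin (n + 1) => aeval X (bernoulli j))
      fun i j => algebraMap R R[X] (A i j)) = of fun i j : Fin (n + 1) =>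
        ((bernoulli j).map (algebraMap ℚ R[X])).eval (Fin.cons X (fun i => C (x i)) i) := by
    ext i j : 1
    refine Fin.cases ?_ (fun i => ?_) i
    · simp [eval_map_algebraMap]
    · simp only [of_apply, Fin.cons_succ, A, eval_map_algebraMap]
      exact (aeval_algebraMap_apply R[X] (x i) _).symm
  rw [hborder, det_cons_apply_linearMap, hbernoulli,
    ← det_eval_matrixOfPolynomials_eq_det_vandermonde]
  · intro j
    rw [(monic_bernoulli j).natDegree_map, natDegree_bernoulli]
  · exact fun j => (monic_bernoulli j).map _

theorem det_aeval_bernoulli_succ {n : ℕ} (x : Fin n → R) :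
    det (of fun i j : Fin n => aeval (x j) (bernoulli (i + 1))) =
      det (vandermonde x) * ∑ t ∈ range (n + 1),
        ((-1) ^ t * (t + 1 : ℚ)⁻¹) • (univ.val.map x).esymm (n - t) := by
  have hvandermonde : det (vandermonde (Fin.cons X fun i => C (x i))) =
      C (det (vandermonde x)) * ((univ.val.map x).map fun a => C a - X).prod := by
    rw [det_vandermonde_cons, RingHom.map_det, mul_comm, Multiset.map_map, ← prod_eq_multiset_prod]
    congr 2
    ext i j
    simp
  rw [det_aeval_bernoulli_succ_eq_integralUnitInterval, hvandermonde, ← smul_eq_C_mul, map_smul,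
    smul_eq_mul, integralUnitInterval_prod_C_sub_X, Multiset.card_map, card_val,
    Finset.card_univ, Fintype.card_fin]

end Polynomial

theorem prod_fin_inv_succ_eq_inv_factorial (D : ℕ) :
    ∏ n : Fin D, ((n : ℚ) + 1)⁻¹ = (D ! : ℚ)⁻¹ := by
  rw [Fin.prod_univ_eq_prod_range (fun n => ((n : ℚ) + 1)⁻¹), prod_inv_distrib,
    ← prod_range_add_one_eq_factorial]
  push_cast
  rfl

open MvPolynomial in
theorem Fpoly_one_eq_det (D : ℕ) :
    Fpoly 1 D = C (D ! : ℚ)⁻¹ * Matrix.det (Matrix.of fun n v : Fin D =>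
      Polynomial.aeval (X v) (Polynomial.bernoulli (n + 1))) := by
  rw [← prod_fin_inv_succ_eq_inv_factorial, map_prod, ← Matrix.det_mul_column, Fpoly,
    ← Matrix.det_submatrix_equiv_self (Equiv.uniqueProd (Fin D) (Fin 1))]
  congr 1
  ext p q : 1
  simp [Fin.val_eq_zero]

theorem vand_eq_det_vandermonde (D : ℕ) :
    vand D = (Matrix.vandermonde (MvPolynomial.X : Fin D → MvPolynomial (Fin D) ℚ)).det :=
  (Matrix.det_vandermonde_eq_prod_filter _).symm

theorem F_one_D_formula_general (D : ℕ) :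
    Fpoly 1 D =
      MvPolynomial.C ((D ! : ℚ))⁻¹ * vand D *
        ∑ t ∈ Finset.range (D + 1),
          MvPolynomial.C ((-1 : ℚ) ^ t * ((t : ℚ) + 1)⁻¹) *
            MvPolynomial.esymm (Fin D) ℚ (D - t) := by
  rw [Fpoly_one_eq_det, Polynomial.det_aeval_bernoulli_succ, ← vand_eq_det_vandermonde, mul_assoc,
    MvPolynomial.esymm_eq_multiset_esymm]
  simp only [MvPolynomial.smul_eq_C_mul]

/-- For every D ≥ 1,
`F_{1,D} = (1/D!) · ∏_{i<j}(x_j−x_i) · Σ_{t=0}^{D} (−1)^t E_{D,D−t}/(t+1)`,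
where `E_{D,k}` is the k-th elementary symmetric polynomial. -/
theorem F_one_D_formula (D : ℕ) (hD : 1 ≤ D) :
    Fpoly 1 D =
      MvPolynomial.C ((D ! : ℚ))⁻¹ * vand D *
        ∑ t ∈ Finset.range (D + 1),
          MvPolynomial.C ((-1 : ℚ) ^ t * ((t : ℚ) + 1)⁻¹) *
            MvPolynomial.esymm (Fin D) ℚ (D - t) :=
  F_one_D_formula_general D
end

section
/- For all integers r, D ≥ 1, Δ_{r,D} = (−1)^{rD(rD+r)/2} · D^{rD(rD+r−2)/2} · F_{r,D}((D−1)/D, (D−2)/D, …, 1/D, 0), i.e., F_{r,D} evaluated at x_v = (D−v)/D for v = 1,…,D. -/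
open Nat Finset

/-! Since `B_k(1 - x) = (-1)^k B_k(x)` and `(D - v)/D = 1 - v/D`, the `(n,(m,v))` entry of the
matrix of `Δ_{r,D}` is the corresponding entry of the matrix of `F_{r,D}((D-1)/D, …, 0)` times
the row factor `(-1)^n D^(n-1)` and the column factor `(-1)^m D^m`. Pulling these factors out of
the determinant leaves a sign and a power of `D` whose exponents are `∑ n + D ∑ m` and
`∑ (n - 1) + D ∑ m`, and Gauss's summation formula evaluates them. -/

theorem MvPolynomial.eval_polynomial_aeval_X {R σ : Type*} [CommSemiring R] (x : σ → R) (v : σ)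
    (P : Polynomial R) : eval x (Polynomial.aeval (X v) P) = P.eval (x v) := by
  rw [Polynomial.aeval_def, Polynomial.hom_eval₂, eval_X, Polynomial.eval]
  congr
  ext
  simp

noncomputable def bernoulliMatrix (r D : ℕ) (x : Fin D → ℚ) :
    Matrix (Fin r × Fin D) (Fin r × Fin D) ℚ :=
  Matrix.of fun p q =>
    ((((p.1 : ℕ) * D + (p.2 : ℕ) + 1 + (q.1 : ℕ) : ℕ) : ℚ))⁻¹ *
      (Polynomial.bernoulli ((p.1 : ℕ) * D + (p.2 : ℕ) + 1 + (q.1 : ℕ))).eval (x q.2)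

lemma eval_Fpoly (r D : ℕ) (x : Fin D → ℚ) :
    MvPolynomial.eval x (Fpoly r D) = (bernoulliMatrix r D x).det := by
  rw [Fpoly, RingHom.map_det]
  congr 1
  ext p q
  simp only [RingHom.mapMatrix_apply, Matrix.map_apply, Matrix.of_apply, bernoulliMatrix]
  rw [map_mul, MvPolynomial.eval_C, MvPolynomial.eval_polynomial_aeval_X]

lemma deltaMat_eq_diagonal_mul_bernoulliMatrix_mul_diagonal (r D : ℕ) :
    deltaMat r D =
      Matrix.diagonal (fun p : Fin r × Fin D =>
          (-1 : ℚ) ^ ((p.1 : ℕ) * D + (p.2 : ℕ) + 1) * (D : ℚ) ^ ((p.1 : ℕ) * D + (p.2 : ℕ))) *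
        bernoulliMatrix r D (fun j => ((D : ℚ) - 1 - (j : ℕ)) / D) *
        Matrix.diagonal (fun q : Fin r × Fin D => (-1 : ℚ) ^ (q.1 : ℕ) * (D : ℚ) ^ (q.1 : ℕ)) := by
  ext p q
  have hD : (D : ℚ) ≠ 0 := Nat.cast_ne_zero.mpr (Fin.pos q.2).ne'
  have hreflect : ((D : ℚ) - 1 - (q.2 : ℕ)) / D = 1 - ((q.2 : ℕ) + 1 : ℚ) / D := by
    field_simp
    ring
  simp only [deltaMat, bernoulliMatrix, Matrix.diagonal_mul, Matrix.mul_diagonal, Matrix.of_apply,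
    hreflect, Polynomial.bernoulli_eval_one_sub]
  generalize (p.1 : ℕ) * D + (p.2 : ℕ) = a
  generalize (q.1 : ℕ) = m
  generalize Polynomial.eval _ (Polynomial.bernoulli (a + 1 + m)) = b
  have hsign : (-1 : ℚ) ^ (a + 1) * (-1) ^ m * (-1) ^ (a + 1 + m) = 1 := by
    rw [← pow_add, ← pow_add, Even.neg_one_pow ⟨_, rfl⟩]
  rw [pow_add (D : ℚ), div_eq_mul_inv]
  linear_combination (-(D : ℚ) ^ a * D ^ m * ((a + 1 + m : ℕ) : ℚ)⁻¹ * b) * hsign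

lemma sum_fin_prod_mul_add_eq_sum_fin (r D : ℕ) :
    ∑ p : Fin r × Fin D, ((p.1 : ℕ) * D + (p.2 : ℕ)) = ∑ k : Fin (r * D), (k : ℕ) :=
  Fintype.sum_equiv finProdFinEquiv _ _ fun p => by simp [finProdFinEquiv, mul_comm, add_comm]

lemma sum_fin_val_mul_two_add (n : ℕ) : (∑ k : Fin n, (k : ℕ)) * 2 + n = n * n := by
  rw [Fin.sum_univ_eq_sum_range (fun k => k), Finset.sum_range_id_mul_two]
  cases n <;> simp [Nat.mul_succ]

lemma sum_fin_prod_fst (r D : ℕ) :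
    ∑ q : Fin r × Fin D, (q.1 : ℕ) = D * ∑ i : Fin r, (i : ℕ) := by
  simp [Fintype.sum_prod_type, Finset.mul_sum]

lemma sum_mul_add_add_one_add_sum_fst (r D : ℕ) :
    ∑ p : Fin r × Fin D, ((p.1 : ℕ) * D + (p.2 : ℕ) + 1) + ∑ q : Fin r × Fin D, (q.1 : ℕ) =
      r * D * (r * D + r) / 2 := by
  have hS := sum_fin_val_mul_two_add (r * D)
  have hT := congrArg (D * ·) (sum_fin_val_mul_two_add r)
  rw [Finset.sum_add_distrib]
  simp only [sum_fin_prod_mul_add_eq_sum_fin, sum_fin_prod_fst, Finset.sum_const, Finset.card_univ,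
    Fintype.card_prod, Fintype.card_fin, smul_eq_mul, mul_one] at hT ⊢
  refine (Nat.div_eq_of_eq_mul_left two_pos ?_).symm
  linarith

lemma sum_mul_add_add_sum_fst (r D : ℕ) :
    ∑ p : Fin r × Fin D, ((p.1 : ℕ) * D + (p.2 : ℕ)) + ∑ q : Fin r × Fin D, (q.1 : ℕ) =
      r * D * (r * D + r - 2) / 2 := by
  have hS := sum_fin_val_mul_two_add (r * D)
  have hT := congrArg (D * ·) (sum_fin_val_mul_two_add r)
  simp only [sum_fin_prod_mul_add_eq_sum_fin, sum_fin_prod_fst] at hT ⊢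
  refine (Nat.div_eq_of_eq_mul_left two_pos ?_).symm
  obtain h | h := Nat.eq_zero_or_pos (r * D)
  · have hrrD : D * (r * r) = 0 := by rw [← mul_assoc, mul_comm D, h, zero_mul]
    rw [h] at hS ⊢
    linarith
  · obtain ⟨k, hk⟩ : ∃ k, r * D + r = k + 2 :=
      ⟨r * D + r - 2, by have := Nat.pos_of_mul_pos_right h; omega⟩
    rw [hk, Nat.add_sub_cancel]
    nlinarith

lemma prod_row_factor_mul_prod_col_factor (r D : ℕ) :
    (∏ p : Fin r × Fin D,
        (-1 : ℚ) ^ ((p.1 : ℕ) * D + (p.2 : ℕ) + 1) * (D : ℚ) ^ ((p.1 : ℕ) * D + (p.2 : ℕ))) *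
      ∏ q : Fin r × Fin D, (-1 : ℚ) ^ (q.1 : ℕ) * (D : ℚ) ^ (q.1 : ℕ) =
      (-1 : ℚ) ^ (r * D * (r * D + r) / 2) * (D : ℚ) ^ (r * D * (r * D + r - 2) / 2) := by
  simp only [Finset.prod_mul_distrib, Finset.prod_pow_eq_pow_sum]
  rw [mul_mul_mul_comm, ← pow_add, ← pow_add, sum_mul_add_add_one_add_sum_fst,
    sum_mul_add_add_sum_fst]

theorem delta_eq_eval_F_general (r D : ℕ) :
    delta r D =
      (-1 : ℚ) ^ (r * D * (r * D + r) / 2) * (D : ℚ) ^ (r * D * (r * D + r - 2) / 2) *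
        MvPolynomial.eval (fun j : Fin D => ((D : ℚ) - 1 - (j : ℕ)) / D) (Fpoly r D) := by
  rw [delta, deltaMat_eq_diagonal_mul_bernoulliMatrix_mul_diagonal, Matrix.det_mul,
    Matrix.det_mul, Matrix.det_diagonal, Matrix.det_diagonal, eval_Fpoly,
    ← prod_row_factor_mul_prod_col_factor]
  ring

/-- For all r, D ≥ 1,
`Δ_{r,D} = (−1)^{rD(rD+r)/2} · D^{rD(rD+r−2)/2} · F_{r,D}((D−1)/D,…,1/D,0)`,
i.e. `F_{r,D}` evaluated at `x_v = (D−v)/D` for `v = 1,…,D`. -/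
theorem delta_eq_eval_F (r D : ℕ) (hr : 1 ≤ r) (hD : 1 ≤ D) :
    delta r D =
      (-1 : ℚ) ^ (r * D * (r * D + r) / 2) * (D : ℚ) ^ (r * D * (r * D + r - 2) / 2) *
        MvPolynomial.eval (fun j : Fin D => ((D : ℚ) - 1 - (j : ℕ)) / D) (Fpoly r D) :=
  delta_eq_eval_F_general r D
end
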